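/- Let a₀ ≥ 0, b₀ > 0, 1 < p < q, θ ≥ 1, and a, b ≥ 0. Then a₀(a/p + b/q) + (b₀/θ)(a/p + b/q)^θ − (1/(qθ))·(a₀ + b₀(a/p + b/q)^{θ−1})·(a+b) ≥ (b₀(q−p)/(pqθ·p^{θ−1}))·a^θ. -/
import Mathlib


theorem energy_gap_estimate (a₀ b₀ p q θ a b : ℝ)
    (ha₀ : 0 ≤ a₀) (hb₀ : 0 < b₀) (hp : 1 < p) (hpq : p < q)
    (hθ : 1 ≤ θ) (ha : 0 ≤ a) (hb : 0 ≤ b) :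
    a₀ * (a / p + b / q) + (b₀ / θ) * (a / p + b / q) ^ θ -
      (1 / (q * θ)) * (a₀ + b₀ * (a / p + b / q) ^ (θ - 1)) * (a + b) ≥
      (b₀ * (q - p) / (p * q * θ * p ^ (θ - 1))) * a ^ θ := by
  have hp0 : (0:ℝ) < p := lt_trans one_pos hp
  have hq0 : (0:ℝ) < q := lt_trans hp0 hpq
  have hθ0 : (0:ℝ) < θ := lt_of_lt_of_le one_pos hθ
  have hθ1 : (0:ℝ) ≤ θ - 1 := by linarith
  set φ := a / p + b / q with hφdef
  have hap : 0 ≤ a / p := div_nonneg ha hp0.le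
  have hφ0 : (0:ℝ) ≤ φ := by positivity
  have hφa : a / p ≤ φ := le_add_of_nonneg_right (div_nonneg hb hq0.le)
  have hsplit : ∀ x : ℝ, 0 ≤ x → x ^ θ = x ^ (θ - 1) * x := by
    intro x hx
    rcases hx.eq_or_lt with h | h
    · rw [← h, Real.zero_rpow (ne_of_gt hθ0)]
      rcases eq_or_lt_of_le hθ1 with h1 | h1
      · rw [← h1, Real.rpow_zero]; ring
      · rw [Real.zero_rpow (ne_of_gt h1)]; ring
    · have h2 := Real.rpow_add h (θ - 1) 1
      rw [sub_add_cancel, Real.rpow_one] at h2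
      exact h2
  set c := φ ^ (θ - 1) with hcdef
  set A := a ^ (θ - 1) with hAdef
  set P := p ^ (θ - 1) with hPdef
  have hP : 0 < P := Real.rpow_pos_of_pos hp0 _
  have hA : 0 ≤ A := Real.rpow_nonneg ha _
  have hc0 : 0 ≤ c := Real.rpow_nonneg hφ0 _
  have hc : A / P ≤ c := by
    have h1 : (a / p) ^ (θ - 1) ≤ φ ^ (θ - 1) :=
      Real.rpow_le_rpow hap hφa hθ1
    rwa [Real.div_rpow ha hp0.le] at h1
  rw [hsplit φ hφ0, hsplit a ha]
  have haa : a / (q * θ) ≤ a / p := by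
    gcongr
    nlinarith
  have hbb : b / (q * θ) ≤ b / q := by
    gcongr
    nlinarith
  have h1 : a₀ * ((a + b) / (q * θ)) ≤ a₀ * φ := by
    apply mul_le_mul_of_nonneg_left _ ha₀
    rw [hφdef, add_div]
    exact add_le_add haa hbb
  have key : (b₀ * (q - p) / (p * q * θ * P)) * (A * a) ≤
      (b₀ / θ) * (c * φ) - (1 / (q * θ)) * (b₀ * c) * (a + b) := by
    have hco : 0 ≤ b₀ * (q - p) * a / (p * q * θ) := by
      have : 0 < q - p := by linarith
      positivity
    have step : (b₀ * (q - p) * a / (p * q * θ)) * (A / P) ≤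
        (b₀ * (q - p) * a / (p * q * θ)) * c :=
      mul_le_mul_of_nonneg_left hc hco
    calc (b₀ * (q - p) / (p * q * θ * P)) * (A * a)
        = (b₀ * (q - p) * a / (p * q * θ)) * (A / P) := by
          field_simp
      _ ≤ (b₀ * (q - p) * a / (p * q * θ)) * c := step
      _ = (b₀ / θ) * (c * φ) - (1 / (q * θ)) * (b₀ * c) * (a + b) := by
          rw [hφdef]
          field_simp
          ring
  have expand : (1 / (q * θ)) * (a₀ + b₀ * c) * (a + b) =
      a₀ * ((a + b) / (q * θ)) + (1 / (q * θ)) * (b₀ * c) * (a + b) := by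
    ring
  linarith [h1, key]
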